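/- arXiv:1201.1984 — 7 statements merged into one kernel-verified Lean document; each statement's English description precedes it below -/
import Mathlib

section
/- The Lie algebra ℬ is generated, as a Lie algebra, by the five elements d_{−1,0}, d_{0,−1}, d_{0,0}, d_{1,0}, d_{0,1}; that is, the smallest Lie subalgebra of ℬ containing {d_{−1,0}, d_{0,−1}, d_{0,0}, d_{1,0}, d_{0,1}} is ℬ itself. -/
/-- The index set `{(m,l) ∈ ℤ × ℤ : m ≥ -1, l ≥ -1}` of the Block type Lie algebra `ℬ`. -/
abbrev BIdx : Type := {p : ℤ × ℤ // -1 ≤ p.1 ∧ -1 ≤ p.2}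

/-- `ℬ`: the free complex vector space on the index set, realized as finitely
supported complex-valued functions. -/
abbrev BlockB : Type := BIdx →₀ ℂ

/-- The basis vector `d_{m,l}` (interpreted as `0` outside the index range). -/
noncomputable def dB (m l : ℤ) : BlockB :=
  if h : -1 ≤ m ∧ -1 ≤ l then Finsupp.single (⟨(m, l), h⟩ : BIdx) 1 else 0

/-- Bracket on basis elements:
`[d_{m,l}, d_{n,k}] = ((m+1)(k+1) − (l+1)(n+1)) • d_{m+n,l+k}`,
interpreted as `0` whenever the coefficient vanishes. -/
noncomputable def brBIdx (p q : BIdx) : BlockB :=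
  (((p.1.1 + 1) * (q.1.2 + 1) - (p.1.2 + 1) * (q.1.1 + 1) : ℤ) : ℂ) •
    dB (p.1.1 + q.1.1) (p.1.2 + q.1.2)

/-- The bilinear extension of the bracket to all of `ℬ`. -/
noncomputable def brB (f g : BlockB) : BlockB :=
  f.sum fun p a => g.sum fun q b => (a * b) • brBIdx p q

lemma brB_dd (m l n k : ℤ) (hm : -1 ≤ m) (hl : -1 ≤ l) (hn : -1 ≤ n) (hk : -1 ≤ k) :
    brB (dB m l) (dB n k) =
      (((m+1)*(k+1) - (l+1)*(n+1) : ℤ) : ℂ) • dB (m+n) (l+k) := by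
  rw [dB, dif_pos (⟨hm, hl⟩ : -1 ≤ m ∧ -1 ≤ l), dB, dif_pos (⟨hn, hk⟩ : -1 ≤ n ∧ -1 ≤ k),
    brB, Finsupp.sum_single_index (by simp), Finsupp.sum_single_index (by simp)]
  simp [brBIdx]

lemma stepP (P : Submodule ℂ BlockB)
    (hP : ∀ x y : BlockB, x ∈ P → y ∈ P → brB x y ∈ P)
    {m l n k : ℤ} (hm : -1 ≤ m) (hl : -1 ≤ l) (hn : -1 ≤ n) (hk : -1 ≤ k)
    (h1 : dB m l ∈ P) (h2 : dB n k ∈ P)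
    (hc : (m+1)*(k+1) - (l+1)*(n+1) ≠ 0) : dB (m+n) (l+k) ∈ P := by
  have h := hP _ _ h1 h2
  rw [brB_dd m l n k hm hl hn hk] at h
  have h' := P.smul_mem ((((m+1)*(k+1) - (l+1)*(n+1) : ℤ) : ℂ))⁻¹ h
  rwa [smul_smul, inv_mul_cancel₀ (by exact_mod_cast hc), one_smul] at h'

/-- The smallest Lie subalgebra of `ℬ` containing
`{d_{−1,0}, d_{0,−1}, d_{0,0}, d_{1,0}, d_{0,1}}` is `ℬ` itself: every complex
subspace of `ℬ` that is closed under the bracket and contains these five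
elements contains every element of `ℬ`. -/
theorem blockB_generated_by_five :
    ∀ P : Submodule ℂ BlockB,
      (∀ x y : BlockB, x ∈ P → y ∈ P → brB x y ∈ P) →
      ({dB (-1) 0, dB 0 (-1), dB 0 0, dB 1 0, dB 0 1} : Set BlockB) ⊆ (P : Set BlockB) →
      ∀ x : BlockB, x ∈ P := by
  intro P hP hgen x
  have hdm10 : dB (-1) 0 ∈ P := hgen (by simp)
  have hd0m1 : dB 0 (-1) ∈ P := hgen (by simp)
  have hd00 : dB 0 0 ∈ P := hgen (by simp)
  have hd10 : dB 1 0 ∈ P := hgen (by simp)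
  have hd01 : dB 0 1 ∈ P := hgen (by simp)
  -- d_{1,1}
  have h11 : dB 1 1 ∈ P := by
    have := stepP P hP (by norm_num) (by norm_num) (by norm_num) (by norm_num) hd10 hd01
      (by norm_num)
    norm_num at this; exact this
  -- d_{-1,1}
  have hm11 : dB (-1) 1 ∈ P := by
    have := stepP P hP (by norm_num) (by norm_num) (by norm_num) (by norm_num) hd01 hdm10
      (by norm_num)
    norm_num at this; exact this
  -- d_{0,2}
  have h02 : dB 0 2 ∈ P := by
    have := stepP P hP (by norm_num) (by norm_num) (by norm_num) (by norm_num) h11 hm11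
      (by norm_num)
    norm_num at this; exact this
  -- d_{1,-1}
  have h1m1 : dB 1 (-1) ∈ P := by
    have := stepP P hP (by norm_num) (by norm_num) (by norm_num) (by norm_num) hd10 hd0m1
      (by norm_num)
    norm_num at this; exact this
  -- d_{2,0}
  have h20 : dB 2 0 ∈ P := by
    have := stepP P hP (by norm_num) (by norm_num) (by norm_num) (by norm_num) h11 h1m1
      (by norm_num)
    norm_num at this; exact this
  -- column m = 0, l = n+2
  have col : ∀ n : ℕ, dB 0 ((n : ℤ) + 2) ∈ P := by
    intro n
    induction n with
    | zero => simpa using h02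
    | succ n ih =>
      have := stepP P hP (by norm_num) (by norm_num) (by norm_num) (by push_cast; omega)
        hd01 ih (by push_cast; intro h; omega)
      convert this using 2 <;> push_cast <;> ring
  -- row l = 0, m = n+2
  have row : ∀ n : ℕ, dB ((n : ℤ) + 2) 0 ∈ P := by
    intro n
    induction n with
    | zero => simpa using h20
    | succ n ih =>
      have := stepP P hP (by norm_num) (by norm_num) (by push_cast; omega) (by norm_num)
        hd10 ih (by push_cast; intro h; omega)
      convert this using 2 <;> push_cast <;> ring
  have colAll : ∀ l : ℤ, -1 ≤ l → dB 0 l ∈ P := by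
    intro l hl
    rcases lt_or_ge l 2 with h | h
    · interval_cases l
      · exact hd0m1
      · exact hd00
      · exact hd01
    · obtain ⟨n, rfl⟩ : ∃ n : ℕ, l = (n : ℤ) + 2 := ⟨(l - 2).toNat, by omega⟩
      exact col n
  have rowAll : ∀ m : ℤ, -1 ≤ m → dB m 0 ∈ P := by
    intro m hm
    rcases lt_or_ge m 2 with h | h
    · interval_cases m
      · exact hdm10
      · exact hd00
      · exact hd10
    · obtain ⟨n, rfl⟩ : ∃ n : ℕ, m = (n : ℤ) + 2 := ⟨(m - 2).toNat, by omega⟩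
      exact row n
  have all : ∀ m l : ℤ, -1 ≤ m → -1 ≤ l → dB m l ∈ P := by
    intro m l hm hl
    by_cases hml : m = 0 ∧ l = 0
    · obtain ⟨rfl, rfl⟩ := hml; exact hd00
    · have hc : (m + 1) * (l + 1) - (0 + 1) * (0 + 1) ≠ 0 := by
        intro h
        have h1 : (m + 1) * (l + 1) = 1 := by omega
        have hm1 : 0 ≤ m + 1 := by omega
        have hl1 : 0 ≤ l + 1 := by omega
        rcases Int.mul_eq_one_iff_eq_one_or_neg_one.mp h1 with ⟨h2, h3⟩ | ⟨h2, h3⟩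
        · exact hml ⟨by omega, by omega⟩
        · omega
      have := stepP P hP hm (by norm_num) (by norm_num) hl (rowAll m hm) (colAll l hl) hc
      simpa using this
  -- now decompose x
  induction x using Finsupp.induction with
  | zero => exact P.zero_mem
  | single_add a b f _ _ ih =>
    refine P.add_mem ?_ ih
    have hsingle : Finsupp.single a b = b • dB a.1.1 a.1.2 := by
      rw [dB, dif_pos (show -1 ≤ a.1.1 ∧ -1 ≤ a.1.2 from a.2)]
      rw [Finsupp.smul_single, smul_eq_mul, mul_one]
    rw [hsingle]
    exact P.smul_mem b (all a.1.1 a.1.2 a.2.1 a.2.2)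
end

section
/- Fix ε ∈ ℝ with ε ≠ 0, a positive integer N, a natural number n₀, and real constants t_{α,n} for 1 ≤ α ≤ N, 0 ≤ n ≤ n₀. Then [Λ^N, Γ_L] = 1 as operators on functions: for every function f : ℝ → ℂ and every x ∈ ℝ, (Γ_L f)(x + Nε) − (Γ_L (Λ^N f))(x) = f(x). -/
/-- The truncated Orlov–Schulman operator `Γ_L`:
`(Γ_L f)(x) = (x/(Nε))·f(x − Nε)
  + Σ_{n=0}^{n₀} Σ_{α=1}^{N} (n + 1 − (α−1)/N)·t_{α,n}·f(x + (Nn − α + 1)ε)`. -/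
noncomputable def GammaL (ε : ℝ) (N n₀ : ℕ) (t : ℕ → ℕ → ℝ) (f : ℝ → ℂ) (x : ℝ) : ℂ :=
  ((x / (N * ε) : ℝ) : ℂ) * f (x - N * ε) +
    ∑ n ∈ Finset.range (n₀ + 1), ∑ α ∈ Finset.Icc 1 N,
      ((((n : ℝ) + 1 - ((α : ℝ) - 1) / N) * t α n : ℝ) : ℂ) *
        f (x + ((N : ℝ) * n - α + 1) * ε)

/-- `[Λ^N, Γ_L] = 1` as operators on functions:
`(Γ_L f)(x + Nε) − (Γ_L (Λ^N f))(x) = f(x)`. -/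
theorem commutator_shift_gammaL (ε : ℝ) (hε : ε ≠ 0) (N : ℕ) (hN : 0 < N) (n₀ : ℕ)
    (t : ℕ → ℕ → ℝ) (f : ℝ → ℂ) (x : ℝ) :
    GammaL ε N n₀ t f (x + N * ε) - GammaL ε N n₀ t (fun y => f (y + N * ε)) x = f x := by
  have hNR : (N : ℝ) ≠ 0 := Nat.cast_ne_zero.mpr hN.ne'
  have hNε : (N : ℝ) * ε ≠ 0 := mul_ne_zero hNR hε
  unfold GammaL
  beta_reduce
  have hsum : ∀ n α : ℕ,
      f (x + (N : ℝ) * ε + ((N : ℝ) * n - α + 1) * ε)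
        = f (x + ((N : ℝ) * n - α + 1) * ε + (N : ℝ) * ε) := by
    intro n α; ring_nf
  have h1 : x + (N : ℝ) * ε - N * ε = x := by ring
  rw [h1]
  have h2 : (∑ n ∈ Finset.range (n₀ + 1), ∑ α ∈ Finset.Icc 1 N,
      ((((n : ℝ) + 1 - ((α : ℝ) - 1) / N) * t α n : ℝ) : ℂ) *
        f (x + (N : ℝ) * ε + ((N : ℝ) * n - α + 1) * ε))
      = ∑ n ∈ Finset.range (n₀ + 1), ∑ α ∈ Finset.Icc 1 N,
      ((((n : ℝ) + 1 - ((α : ℝ) - 1) / N) * t α n : ℝ) : ℂ) *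
        f (x + ((N : ℝ) * n - α + 1) * ε + (N : ℝ) * ε) := by
    refine Finset.sum_congr rfl fun n _ => Finset.sum_congr rfl fun α _ => ?_
    rw [hsum]
  rw [h2]
  have h3 : ((x + (N : ℝ) * ε) / ((N : ℝ) * ε)) = x / ((N : ℝ) * ε) + 1 := by
    field_simp
  rw [h3]
  have h4 : x - (N : ℝ) * ε + (N : ℝ) * ε = x := by ring
  rw [h4]
  set S := ∑ n ∈ Finset.range (n₀ + 1), ∑ α ∈ Finset.Icc 1 N,
      ((((n : ℝ) + 1 - ((α : ℝ) - 1) / N) * t α n : ℝ) : ℂ) *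
        f (x + ((N : ℝ) * n - α + 1) * ε + (N : ℝ) * ε) with hS
  push_cast
  ring
end

section
/- Fix ε ∈ ℝ with ε ≠ 0, a positive integer M, a natural number n₀, and real constants t_{β,n} for −M+1 ≤ β ≤ 0, 0 ≤ n ≤ n₀. Then [Λ^{−M}, Γ_R] = 1 as operators on functions: for every function f : ℝ → ℂ and every x ∈ ℝ, (Γ_R f)(x − Mε) − (Γ_R (Λ^{−M} f))(x) = f(x). -/
/-- The truncated Orlov–Schulman operator `Γ_R`:
`(Γ_R f)(x) = −(x/(Mε))·f(x + Mε)
  − Σ_{n=0}^{n₀} Σ_{β=−M+1}^{0} (n + 1 + β/M)·t_{β,n}·f(x − (Mn + β)ε)`. -/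
noncomputable def GammaR (ε : ℝ) (M n₀ : ℕ) (t : ℤ → ℕ → ℝ) (f : ℝ → ℂ) (x : ℝ) : ℂ :=
  -(((x / (M * ε)) : ℝ) : ℂ) * f (x + M * ε) -
    ∑ n ∈ Finset.range (n₀ + 1), ∑ β ∈ Finset.Icc (-(M : ℤ) + 1) 0,
      ((((n : ℝ) + 1 + (β : ℝ) / M) * t β n : ℝ) : ℂ) *
        f (x - ((M : ℝ) * n + (β : ℝ)) * ε)

/-- `[Λ^{−M}, Γ_R] = 1` as operators on functions:
`(Γ_R f)(x − Mε) − (Γ_R (Λ^{−M} f))(x) = f(x)`. -/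
theorem commutator_shift_gammaR (ε : ℝ) (hε : ε ≠ 0) (M : ℕ) (hM : 0 < M) (n₀ : ℕ)
    (t : ℤ → ℕ → ℝ) (f : ℝ → ℂ) (x : ℝ) :
    GammaR ε M n₀ t f (x - M * ε) - GammaR ε M n₀ t (fun y => f (y - M * ε)) x = f x := by
  have hM0 : (M : ℝ) ≠ 0 := Nat.cast_ne_zero.mpr hM.ne'
  have hMε : ((M : ℂ)) * (ε : ℂ) ≠ 0 := by
    exact_mod_cast (mul_ne_zero hM0 hε : (M : ℝ) * ε ≠ 0)
  simp only [GammaR]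
  have hsum : ∀ (n : ℕ) (β : ℤ),
      f (x - (M : ℝ) * ε - ((M : ℝ) * n + (β : ℝ)) * ε)
        = f (x - ((M : ℝ) * n + (β : ℝ)) * ε - (M : ℝ) * ε) := by
    intro n β; ring_nf
  simp only [hsum]
  have h1 : x - (M : ℝ) * ε + (M : ℝ) * ε = x := by ring
  have h2 : x + (M : ℝ) * ε - (M : ℝ) * ε = x := by ring
  rw [h1, h2]
  have key : (-(((x - (M : ℝ) * ε) / ((M : ℝ) * ε)) : ℝ) : ℂ)
      - (-(((x / ((M : ℝ) * ε)) : ℝ) : ℂ)) = 1 := by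
    push_cast
    field_simp
    rw [div_eq_one_iff_eq hMε]
    ring
  linear_combination key * f x
end

section
/- Fix ε ∈ ℝ with ε ≠ 0, a positive integer N, a natural number n₀, and indices α₀ ∈ {1,…,N}, m₀ ∈ {0,…,n₀}; set K = N(m₀+1) − α₀ + 1. Let g : ℝ × T → ℂ, where T = ℝ^{S} with S = {(α,n) : 1 ≤ α ≤ N, 0 ≤ n ≤ n₀}, be differentiable with respect to the coordinate t_{α₀,m₀} at every point. Then the operator ∂_{t_{α₀,m₀}} − Λ^K commutes with Γ_L: for all (x, t) ∈ ℝ × T, ∂_{t_{α₀,m₀}}(Γ_L g)(x,t) − (Γ_L g)(x + Kε, t) = (Γ_L (∂_{t_{α₀,m₀}} g − Λ^K g))(x, t), where Λ^K and Γ_L act in the x-variable. -/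
/-- The Orlov–Schulman operator `Γ_L`, acting in the `x`-variable on functions
`g : ℝ × T → ℂ` with `T = ℝ^{ℕ×ℕ}` (coordinates `t_{α,n}`):
`(Γ_L g)(x,t) = (x/(Nε))·g(x − Nε, t)
  + Σ_{n=0}^{n₀} Σ_{α=1}^{N} (n + 1 − (α−1)/N)·t_{α,n}·g(x + (Nn − α + 1)ε, t)`. -/
noncomputable def GammaL2 (ε : ℝ) (N n₀ : ℕ) (g : ℝ → (ℕ × ℕ → ℝ) → ℂ)
    (x : ℝ) (t : ℕ × ℕ → ℝ) : ℂ :=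
  ((x / (N * ε) : ℝ) : ℂ) * g (x - N * ε) t +
    ∑ n ∈ Finset.range (n₀ + 1), ∑ α ∈ Finset.Icc 1 N,
      ((((n : ℝ) + 1 - ((α : ℝ) - 1) / N) * t (α, n) : ℝ) : ℂ) *
        g (x + ((N : ℝ) * n - α + 1) * ε) t

/-- The operator `∂_{t_{α₀,m₀}} − Λ^K` with `K = N(m₀+1) − α₀ + 1` commutes
with `Γ_L`:
`∂_{t_{α₀,m₀}}(Γ_L g)(x,t) − (Γ_L g)(x + Kε, t)
  = (Γ_L (∂_{t_{α₀,m₀}} g − Λ^K g))(x, t)`. -/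
theorem gammaL_commutes_time_flow (ε : ℝ) (hε : ε ≠ 0) (N : ℕ) (hN : 0 < N)
    (n₀ α₀ m₀ : ℕ) (hα₀ : 1 ≤ α₀ ∧ α₀ ≤ N) (hm₀ : m₀ ≤ n₀)
    (g : ℝ → (ℕ × ℕ → ℝ) → ℂ)
    (hg : ∀ (x : ℝ) (t : ℕ × ℕ → ℝ),
      DifferentiableAt ℝ (fun s => g x (Function.update t (α₀, m₀) s)) (t (α₀, m₀)))
    (x : ℝ) (t : ℕ × ℕ → ℝ) :
    deriv (fun s => GammaL2 ε N n₀ g x (Function.update t (α₀, m₀) s)) (t (α₀, m₀)) -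
        GammaL2 ε N n₀ g (x + ((N : ℝ) * (m₀ + 1) - α₀ + 1) * ε) t =
      GammaL2 ε N n₀
        (fun y s =>
          deriv (fun u => g y (Function.update s (α₀, m₀) u)) (s (α₀, m₀)) -
            g (y + ((N : ℝ) * (m₀ + 1) - α₀ + 1) * ε) s) x t := by
  obtain ⟨hα1, hα2⟩ := hα₀
  set p : ℕ × ℕ := (α₀, m₀) with hp
  set D : ℝ → ℂ := fun y => deriv (fun u => g y (Function.update t p u)) (t p) with hD
  have key : ∀ y : ℝ, HasDerivAt (fun s => g y (Function.update t p s)) (D y) (t p) :=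
    fun y => (hg y t).hasDerivAt
  have hcoef : ∀ α n : ℕ, HasDerivAt
      (fun s : ℝ => ((((n : ℝ) + 1 - ((α : ℝ) - 1) / N) * (Function.update t p s) (α, n) : ℝ) : ℂ))
      (if (α, n) = p then ((((n : ℝ) + 1 - ((α : ℝ) - 1) / N) : ℝ) : ℂ) else 0) (t p) := by
    intro α n
    by_cases h : (α, n) = p
    · have h1 : (fun s : ℝ => ((((n : ℝ) + 1 - ((α : ℝ) - 1) / N) * (Function.update t p s) (α, n) : ℝ) : ℂ))
          = fun s : ℝ => ((((n : ℝ) + 1 - ((α : ℝ) - 1) / N) : ℝ) : ℂ) * (s : ℂ) := by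
        funext s; rw [h, Function.update_self]; push_cast; ring
      rw [if_pos h, h1]
      simpa using (Complex.ofRealCLM.hasDerivAt (x := t p)).const_mul
        ((((n : ℝ) + 1 - ((α : ℝ) - 1) / N) : ℝ) : ℂ)
    · have h1 : (fun s : ℝ => ((((n : ℝ) + 1 - ((α : ℝ) - 1) / N) * (Function.update t p s) (α, n) : ℝ) : ℂ))
          = fun _ : ℝ => ((((n : ℝ) + 1 - ((α : ℝ) - 1) / N) * t (α, n) : ℝ) : ℂ) := by
        funext s; rw [Function.update_of_ne h]
      rw [if_neg h, h1]
      exact hasDerivAt_const _ _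
  have hsummand : ∀ α n : ℕ, HasDerivAt
      (fun s : ℝ => ((((n : ℝ) + 1 - ((α : ℝ) - 1) / N) * (Function.update t p s) (α, n) : ℝ) : ℂ)
          * g (x + ((N : ℝ) * n - α + 1) * ε) (Function.update t p s))
      ((if (α, n) = p then ((((n : ℝ) + 1 - ((α : ℝ) - 1) / N) : ℝ) : ℂ) else 0)
          * g (x + ((N : ℝ) * n - α + 1) * ε) t
        + ((((n : ℝ) + 1 - ((α : ℝ) - 1) / N) * t (α, n) : ℝ) : ℂ)
          * D (x + ((N : ℝ) * n - α + 1) * ε)) (t p) := by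
    intro α n
    have := (hcoef α n).fun_mul (key (x + ((N : ℝ) * n - α + 1) * ε))
    simpa [Function.update_eq_self] using this
  have hA : HasDerivAt (fun s : ℝ => ((x / (N * ε) : ℝ) : ℂ) * g (x - N * ε) (Function.update t p s))
      (((x / (N * ε) : ℝ) : ℂ) * D (x - N * ε)) (t p) := (key _).const_mul _
  have hB : HasDerivAt (fun s : ℝ => ∑ n ∈ Finset.range (n₀ + 1), ∑ α ∈ Finset.Icc 1 N,
        ((((n : ℝ) + 1 - ((α : ℝ) - 1) / N) * (Function.update t p s) (α, n) : ℝ) : ℂ)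
          * g (x + ((N : ℝ) * n - α + 1) * ε) (Function.update t p s))
      (∑ n ∈ Finset.range (n₀ + 1), ∑ α ∈ Finset.Icc 1 N,
        ((if (α, n) = p then ((((n : ℝ) + 1 - ((α : ℝ) - 1) / N) : ℝ) : ℂ) else 0)
            * g (x + ((N : ℝ) * n - α + 1) * ε) t
          + ((((n : ℝ) + 1 - ((α : ℝ) - 1) / N) * t (α, n) : ℝ) : ℂ)
            * D (x + ((N : ℝ) * n - α + 1) * ε))) (t p) :=
    HasDerivAt.fun_sum fun n _ => HasDerivAt.fun_sum fun α _ => hsummand α n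
  have hderiv := (hA.fun_add hB).deriv
  have hfun : (fun s => GammaL2 ε N n₀ g x (Function.update t p s))
      = fun s : ℝ => (((x / (N * ε) : ℝ) : ℂ) * g (x - N * ε) (Function.update t p s)
        + ∑ n ∈ Finset.range (n₀ + 1), ∑ α ∈ Finset.Icc 1 N,
        ((((n : ℝ) + 1 - ((α : ℝ) - 1) / N) * (Function.update t p s) (α, n) : ℝ) : ℂ)
          * g (x + ((N : ℝ) * n - α + 1) * ε) (Function.update t p s)) := rfl
  rw [hfun, hderiv]
  -- unfold GammaL2 and rewrite derivs as D
  have hDval : ∀ y : ℝ, deriv (fun u => g y (Function.update t p u)) (t p) = D y := fun _ => rfl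
  simp only [GammaL2, hDval]
  -- split the double sum of sums
  simp only [Finset.sum_add_distrib, mul_sub, Finset.sum_sub_distrib]
  -- extract the single nonzero term of the `if` sum
  have hextract : (∑ n ∈ Finset.range (n₀ + 1), ∑ α ∈ Finset.Icc 1 N,
      (if (α, n) = p then ((((n : ℝ) + 1 - ((α : ℝ) - 1) / N) : ℝ) : ℂ) else 0)
        * g (x + ((N : ℝ) * n - α + 1) * ε) t)
      = ((((m₀ : ℝ) + 1 - ((α₀ : ℝ) - 1) / N) : ℝ) : ℂ)
        * g (x + ((N : ℝ) * m₀ - α₀ + 1) * ε) t := by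
    rw [Finset.sum_eq_single m₀]
    · rw [Finset.sum_eq_single α₀]
      · simp [hp]
      · intro b _ hb; simp [hp, hb]
      · intro h; exact absurd (Finset.mem_Icc.mpr ⟨hα1, hα2⟩) h
    · intro n _ hn
      apply Finset.sum_eq_zero; intro α _
      have : (α, n) ≠ p := by simp [hp, hn]
      simp [this]
    · intro h; exact absurd (Finset.mem_range.mpr (Nat.lt_succ_of_le hm₀)) h
  rw [hextract]
  -- normalize the arguments of g
  have e1 : x + ((N : ℝ) * (m₀ + 1) - α₀ + 1) * ε - N * ε = x + ((N : ℝ) * m₀ - α₀ + 1) * ε := by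
    ring
  have e2 : x - N * ε + ((N : ℝ) * (m₀ + 1) - α₀ + 1) * ε = x + ((N : ℝ) * m₀ - α₀ + 1) * ε := by
    ring
  have e3 : ∀ n α : ℕ, x + ((N : ℝ) * (m₀ + 1) - α₀ + 1) * ε + ((N : ℝ) * n - α + 1) * ε
      = x + ((N : ℝ) * n - α + 1) * ε + ((N : ℝ) * (m₀ + 1) - α₀ + 1) * ε := fun n α => by ring
  rw [e1, e2]
  simp only [e3]
  -- the coefficient identity
  have hN' : (N : ℂ) ≠ 0 := Nat.cast_ne_zero.mpr hN.ne'
  have hε' : (ε : ℂ) ≠ 0 := Complex.ofReal_ne_zero.mpr hε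
  have hc : ((((m₀ : ℝ) + 1 - ((α₀ : ℝ) - 1) / N) : ℝ) : ℂ)
      = (((x + ((N : ℝ) * (m₀ + 1) - α₀ + 1) * ε) / (N * ε) : ℝ) : ℂ)
        - ((x / (N * ε) : ℝ) : ℂ) := by
    push_cast
    field_simp
    ring
  rw [hc]
  ring
end

section
/- Fix ε ∈ ℝ with ε ≠ 0, a positive integer M, a natural number n₀, and indices β₀ ∈ {−M+1,…,0}, m₀ ∈ {0,…,n₀}; set J = −M(m₀+1) − β₀. Let g : ℝ × T → ℂ, where T = ℝ^{S} with S = {(β,n) : −M+1 ≤ β ≤ 0, 0 ≤ n ≤ n₀}, be differentiable with respect to the coordinate t_{β₀,m₀} at every point. Then the operator ∂_{t_{β₀,m₀}} + Λ^{J} commutes with Γ_R: for all (x, t) ∈ ℝ × T, ∂_{t_{β₀,m₀}}(Γ_R g)(x,t) + (Γ_R g)(x + Jε, t) = (Γ_R (∂_{t_{β₀,m₀}} g + Λ^{J} g))(x, t), where Λ^{J} and Γ_R act in the x-variable. -/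
/-- The Orlov–Schulman operator `Γ_R`, acting in the `x`-variable on functions
`g : ℝ × T → ℂ` with `T = ℝ^{ℤ×ℕ}` (coordinates `t_{β,n}`):
`(Γ_R g)(x,t) = −(x/(Mε))·g(x + Mε, t)
  − Σ_{n=0}^{n₀} Σ_{β=−M+1}^{0} (n + 1 + β/M)·t_{β,n}·g(x − (Mn + β)ε, t)`. -/
noncomputable def GammaR2 (ε : ℝ) (M n₀ : ℕ) (g : ℝ → (ℤ × ℕ → ℝ) → ℂ)
    (x : ℝ) (t : ℤ × ℕ → ℝ) : ℂ :=
  -(((x / (M * ε)) : ℝ) : ℂ) * g (x + M * ε) t -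
    ∑ n ∈ Finset.range (n₀ + 1), ∑ β ∈ Finset.Icc (-(M : ℤ) + 1) 0,
      ((((n : ℝ) + 1 + (β : ℝ) / M) * t (β, n) : ℝ) : ℂ) *
        g (x - ((M : ℝ) * n + (β : ℝ)) * ε) t

/-- The operator `∂_{t_{β₀,m₀}} + Λ^J` with `J = −M(m₀+1) − β₀` commutes
with `Γ_R`:
`∂_{t_{β₀,m₀}}(Γ_R g)(x,t) + (Γ_R g)(x + Jε, t)
  = (Γ_R (∂_{t_{β₀,m₀}} g + Λ^J g))(x, t)`. -/
theorem gammaR_commutes_time_flow (ε : ℝ) (hε : ε ≠ 0) (M : ℕ) (hM : 0 < M)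
    (n₀ : ℕ) (β₀ : ℤ) (m₀ : ℕ) (hβ₀ : -(M : ℤ) + 1 ≤ β₀ ∧ β₀ ≤ 0) (hm₀ : m₀ ≤ n₀)
    (g : ℝ → (ℤ × ℕ → ℝ) → ℂ)
    (hg : ∀ (x : ℝ) (t : ℤ × ℕ → ℝ),
      DifferentiableAt ℝ (fun s => g x (Function.update t (β₀, m₀) s)) (t (β₀, m₀)))
    (x : ℝ) (t : ℤ × ℕ → ℝ) :
    deriv (fun s => GammaR2 ε M n₀ g x (Function.update t (β₀, m₀) s)) (t (β₀, m₀)) +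
        GammaR2 ε M n₀ g (x + (-((M : ℝ) * (m₀ + 1)) - (β₀ : ℝ)) * ε) t =
      GammaR2 ε M n₀
        (fun y s =>
          deriv (fun u => g y (Function.update s (β₀, m₀) u)) (s (β₀, m₀)) +
            g (y + (-((M : ℝ) * (m₀ + 1)) - (β₀ : ℝ)) * ε) s) x t := by
  classical
  obtain ⟨hβ₁, hβ₂⟩ := hβ₀
  have hMR : (M : ℝ) ≠ 0 := Nat.cast_ne_zero.mpr hM.ne'
  set p : ℤ × ℕ := (β₀, m₀) with hp
  set J : ℝ := -((M : ℝ) * (m₀ + 1)) - (β₀ : ℝ) with hJdef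
  set Dg : ℝ → ℂ := fun y => deriv (fun u => g y (Function.update t p u)) (t p) with hDg
  have hgd : ∀ y, HasDerivAt (fun s => g y (Function.update t p s)) (Dg y) (t p) :=
    fun y => (hg y t).hasDerivAt
  have key : HasDerivAt (fun s => GammaR2 ε M n₀ g x (Function.update t p s))
      (-(((x / (M * ε)) : ℝ) : ℂ) * Dg (x + M * ε) -
        ∑ n ∈ Finset.range (n₀ + 1), ∑ β ∈ Finset.Icc (-(M : ℤ) + 1) 0,
          ((if (β, n) = p then ((((n : ℝ) + 1 + (β : ℝ) / M) : ℝ) : ℂ) else 0) *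
              g (x - ((M : ℝ) * n + (β : ℝ)) * ε) t +
            ((((n : ℝ) + 1 + (β : ℝ) / M) * t (β, n) : ℝ) : ℂ) *
              Dg (x - ((M : ℝ) * n + (β : ℝ)) * ε))) (t p) := by
    unfold GammaR2
    apply HasDerivAt.sub
    · exact (hgd (x + M * ε)).const_mul _
    · apply HasDerivAt.fun_sum
      intro n _
      apply HasDerivAt.fun_sum
      intro β _
      by_cases hq : ((β, n) : ℤ × ℕ) = p
      · have hup : ∀ s : ℝ, Function.update t p s (β, n) = s := by
          intro s; rw [hq]; exact Function.update_self _ _ _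
        simp only [hup]
        have h1 : HasDerivAt (fun s : ℝ => ((((n : ℝ) + 1 + (β : ℝ) / M) * s : ℝ) : ℂ))
            ((((n : ℝ) + 1 + (β : ℝ) / M) : ℝ) : ℂ) (t p) := by
          have := ((hasDerivAt_id (t p)).const_mul ((n : ℝ) + 1 + (β : ℝ) / M)).ofReal_comp
          simpa using this
        have h2 := h1.mul (hgd (x - ((M : ℝ) * n + (β : ℝ)) * ε))
        simp only [Function.update_eq_self] at h2
        rw [if_pos hq]
        have hq' : t (β, n) = t p := by rw [hq]
        rw [hq']
        exact h2
      · have hup : ∀ s : ℝ, Function.update t p s (β, n) = t (β, n) := fun s =>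
          Function.update_of_ne hq _ _
        simp only [hup]
        rw [if_neg hq]
        simpa using (hgd (x - ((M : ℝ) * n + (β : ℝ)) * ε)).const_mul
          (((((n : ℝ) + 1 + (β : ℝ) / M) * t (β, n)) : ℝ) : ℂ)
  rw [key.deriv]
  have hA : (∑ n ∈ Finset.range (n₀ + 1), ∑ β ∈ Finset.Icc (-(M : ℤ) + 1) 0,
      (if (β, n) = p then ((((n : ℝ) + 1 + (β : ℝ) / M) : ℝ) : ℂ) else 0) *
        g (x - ((M : ℝ) * n + (β : ℝ)) * ε) t)
      = ((((m₀ : ℝ) + 1 + (β₀ : ℝ) / M) : ℝ) : ℂ) *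
        g (x - ((M : ℝ) * m₀ + (β₀ : ℝ)) * ε) t := by
    rw [Finset.sum_eq_single m₀]
    · rw [Finset.sum_eq_single β₀]
      · rw [if_pos rfl]
      · intro b _ hne
        rw [if_neg (by simp [hp, Prod.ext_iff, hne]), zero_mul]
      · intro h; exact absurd (Finset.mem_Icc.mpr ⟨hβ₁, hβ₂⟩) h
    · intro n _ hne
      apply Finset.sum_eq_zero
      intro β _
      rw [if_neg (by simp [hp, Prod.ext_iff, hne]), zero_mul]
    · intro h; exact absurd (Finset.mem_range.mpr (Nat.lt_succ_of_le hm₀)) h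
  simp only [Finset.sum_add_distrib]
  rw [hA]
  simp only [GammaR2, hDg, mul_add, Finset.sum_add_distrib]
  have hsum : (∑ n ∈ Finset.range (n₀ + 1), ∑ β ∈ Finset.Icc (-(M : ℤ) + 1) 0,
      ((((n : ℝ) + 1 + (β : ℝ) / M) * t (β, n) : ℝ) : ℂ) *
        g (x + J * ε - ((M : ℝ) * n + (β : ℝ)) * ε) t)
      = ∑ n ∈ Finset.range (n₀ + 1), ∑ β ∈ Finset.Icc (-(M : ℤ) + 1) 0,
      ((((n : ℝ) + 1 + (β : ℝ) / M) * t (β, n) : ℝ) : ℂ) *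
        g (x - ((M : ℝ) * n + (β : ℝ)) * ε + J * ε) t := by
    refine Finset.sum_congr rfl fun n _ => Finset.sum_congr rfl fun β _ => ?_
    rw [show x + J * ε - ((M : ℝ) * n + (β : ℝ)) * ε
        = x - ((M : ℝ) * n + (β : ℝ)) * ε + J * ε by ring]
  rw [hsum]
  have h1 : x + J * ε + (M : ℝ) * ε = x - ((M : ℝ) * m₀ + (β₀ : ℝ)) * ε := by
    rw [hJdef]; ring
  have h2 : x + (M : ℝ) * ε + J * ε = x - ((M : ℝ) * m₀ + (β₀ : ℝ)) * ε := by
    rw [hJdef]; ring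
  rw [h1, h2]
  have hc : ((m₀ : ℝ) + 1 + (β₀ : ℝ) / M) + (x + J * ε) / ((M : ℝ) * ε) = x / ((M : ℝ) * ε) := by
    rw [hJdef]; field_simp; ring
  have hcC : ((((m₀ : ℝ) + 1 + (β₀ : ℝ) / M) : ℝ) : ℂ) + (((x + J * ε) / ((M : ℝ) * ε) : ℝ) : ℂ)
      = ((x / ((M : ℝ) * ε) : ℝ) : ℂ) := by
    rw [← Complex.ofReal_add, hc]
  linear_combination (-(g (x - ((M : ℝ) * m₀ + (β₀ : ℝ)) * ε) t)) * hcC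
end

section
/- Fix ε ∈ ℝ with ε ≠ 0, a positive integer N, a natural number n₀, real constants t_{α,n} for 1 ≤ α ≤ N, 0 ≤ n ≤ n₀, and λ > 0. Define ξ_L(x,λ) = Σ_{n=0}^{n₀} Σ_{α=1}^{N} λ^{n+1−(α−1)/N}·t_{α,n} + (x/(Nε))·log λ and w_L(x,λ) = exp(ξ_L(x,λ)). Then: (i) w_L(x + Nε, λ) = λ·w_L(x, λ) for all x ∈ ℝ; and (ii) (Γ_L w_L(·,λ))(x) = ∂w_L/∂λ (x, λ) for all x ∈ ℝ, where Γ_L acts in the x-variable. -/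
/-- `ξ_L(x,λ) = Σ_{n=0}^{n₀} Σ_{α=1}^{N} λ^{n+1−(α−1)/N}·t_{α,n} + (x/(Nε))·log λ`. -/
noncomputable def xiL (ε : ℝ) (N n₀ : ℕ) (t : ℕ → ℕ → ℝ) (x lam : ℝ) : ℝ :=
  (∑ n ∈ Finset.range (n₀ + 1), ∑ α ∈ Finset.Icc 1 N,
      lam ^ ((n : ℝ) + 1 - ((α : ℝ) - 1) / N) * t α n) +
    (x / (N * ε)) * Real.log lam

/-- The free wave function `w_L(x,λ) = exp(ξ_L(x,λ))`. -/
noncomputable def wL (ε : ℝ) (N n₀ : ℕ) (t : ℕ → ℕ → ℝ) (x lam : ℝ) : ℂ :=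
  Complex.exp ((xiL ε N n₀ t x lam : ℝ) : ℂ)

/-- (i) `w_L(x + Nε, λ) = λ·w_L(x, λ)`, and
(ii) `(Γ_L w_L(·,λ))(x) = ∂w_L/∂λ (x, λ)`. -/
theorem wL_linear_equations (ε : ℝ) (hε : ε ≠ 0) (N : ℕ) (hN : 0 < N) (n₀ : ℕ)
    (t : ℕ → ℕ → ℝ) (lam : ℝ) (hlam : 0 < lam) :
    (∀ x : ℝ, wL ε N n₀ t (x + N * ε) lam = (lam : ℂ) * wL ε N n₀ t x lam) ∧
    (∀ x : ℝ, GammaL ε N n₀ t (fun y => wL ε N n₀ t y lam) x =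
      deriv (fun μ => wL ε N n₀ t x μ) lam) := by
  have hN' : (N : ℝ) ≠ 0 := Nat.cast_ne_zero.mpr hN.ne'
  have hNε : (N : ℝ) * ε ≠ 0 := mul_ne_zero hN' hε
  have hl : lam ≠ 0 := hlam.ne'
  -- shift lemma
  have shift : ∀ x c : ℝ, wL ε N n₀ t (x + c) lam
      = ((lam ^ (c / ((N : ℝ) * ε)) : ℝ) : ℂ) * wL ε N n₀ t x lam := by
    intro x c
    have hxi : xiL ε N n₀ t (x + c) lam
        = xiL ε N n₀ t x lam + (c / ((N : ℝ) * ε)) * Real.log lam := by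
      unfold xiL; ring
    rw [wL, hxi, Real.rpow_def_of_pos hlam, Complex.ofReal_add, Complex.exp_add,
      Complex.ofReal_exp, mul_comm (Real.log lam)]
    unfold wL; ring
  constructor
  · intro x
    have := shift x ((N : ℝ) * ε)
    rw [div_self hNε, Real.rpow_one] at this
    exact this
  · intro x
    -- derivative of ξ in λ
    set D : ℝ := (∑ n ∈ Finset.range (n₀ + 1), ∑ α ∈ Finset.Icc 1 N,
        ((n : ℝ) + 1 - ((α : ℝ) - 1) / N) *
          lam ^ ((n : ℝ) + 1 - ((α : ℝ) - 1) / N - 1) * t α n) +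
      (x / ((N : ℝ) * ε)) * lam⁻¹ with hD
    have hxi : HasDerivAt (fun μ => xiL ε N n₀ t x μ) D lam := by
      unfold xiL
      apply HasDerivAt.add
      · apply HasDerivAt.fun_sum
        intro n _
        apply HasDerivAt.fun_sum
        intro α _
        exact (Real.hasDerivAt_rpow_const (Or.inl hl)).mul_const _
      · exact ((Real.hasDerivAt_log hl).const_mul _)
    have hw : HasDerivAt (fun μ => wL ε N n₀ t x μ)
        (Complex.exp ((xiL ε N n₀ t x lam : ℝ) : ℂ) * (D : ℂ)) lam := by
      have := (hxi.ofReal_comp).cexp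
      exact this
    rw [hw.deriv]
    -- compute LHS
    have h1 : wL ε N n₀ t (x - (N : ℝ) * ε) lam
        = ((lam⁻¹ : ℝ) : ℂ) * wL ε N n₀ t x lam := by
      have := shift x (-((N : ℝ) * ε))
      rw [neg_div, div_self hNε, Real.rpow_neg_one] at this
      simpa [sub_eq_add_neg] using this
    have h2 : ∀ n ∈ Finset.range (n₀ + 1), ∀ α ∈ Finset.Icc 1 N,
        wL ε N n₀ t (x + ((N : ℝ) * n - α + 1) * ε) lam
        = ((lam ^ ((n : ℝ) + 1 - ((α : ℝ) - 1) / N - 1) : ℝ) : ℂ) * wL ε N n₀ t x lam := by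
      intro n _ α _
      have := shift x (((N : ℝ) * n - α + 1) * ε)
      have hexp : ((N : ℝ) * n - α + 1) * ε / ((N : ℝ) * ε)
          = (n : ℝ) + 1 - ((α : ℝ) - 1) / N - 1 := by
        field_simp
        ring
      rw [hexp] at this
      exact this
    show ((x / (N * ε) : ℝ) : ℂ) * wL ε N n₀ t (x - N * ε) lam +
        (∑ n ∈ Finset.range (n₀ + 1), ∑ α ∈ Finset.Icc 1 N,
          ((((n : ℝ) + 1 - ((α : ℝ) - 1) / N) * t α n : ℝ) : ℂ) *
            wL ε N n₀ t (x + ((N : ℝ) * n - α + 1) * ε) lam)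
        = wL ε N n₀ t x lam * (D : ℂ)
    rw [h1, Finset.sum_congr rfl (fun n hn => Finset.sum_congr rfl (fun α hα => by
      rw [h2 n hn α hα]))]
    rw [hD]
    push_cast
    rw [mul_add, add_comm (((x : ℂ) / ((N:ℂ) * ε)) * ((lam : ℂ)⁻¹ * wL ε N n₀ t x lam))]
    congr 1
    · rw [Finset.mul_sum]
      refine Finset.sum_congr rfl fun n _ => ?_
      rw [Finset.mul_sum]
      refine Finset.sum_congr rfl fun α _ => ?_
      ring
    · ring
end

section
/- Fix ε ∈ ℝ with ε ≠ 0, a positive integer M, a natural number n₀, real constants t_{β,n} for −M+1 ≤ β ≤ 0, 0 ≤ n ≤ n₀, and λ > 0. Define ξ_R(x,λ) = −Σ_{n=0}^{n₀} Σ_{β=−M+1}^{0} λ^{−(n+1+β/M)}·t_{β,n} + (x/(Mε))·log λ and w_R(x,λ) = exp(ξ_R(x,λ)). Then: (i) w_R(x − Mε, λ) = λ^{−1}·w_R(x, λ) for all x ∈ ℝ; and (ii) (Γ_R w_R(·,λ))(x) = −λ²·∂w_R/∂λ (x, λ) for all x ∈ ℝ (the right-hand side being the derivative of w_R with respect to λ^{−1}),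 where Γ_R acts in the x-variable. -/
/-- `ξ_R(x,λ) = −Σ_{n=0}^{n₀} Σ_{β=−M+1}^{0} λ^{−(n+1+β/M)}·t_{β,n} + (x/(Mε))·log λ`. -/
noncomputable def xiR (ε : ℝ) (M n₀ : ℕ) (t : ℤ → ℕ → ℝ) (x lam : ℝ) : ℝ :=
  -(∑ n ∈ Finset.range (n₀ + 1), ∑ β ∈ Finset.Icc (-(M : ℤ) + 1) 0,
      lam ^ (-((n : ℝ) + 1 + (β : ℝ) / M)) * t β n) +
    (x / (M * ε)) * Real.log lam

/-- The free wave function `w_R(x,λ) = exp(ξ_R(x,λ))`. -/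
noncomputable def wR (ε : ℝ) (M n₀ : ℕ) (t : ℤ → ℕ → ℝ) (x lam : ℝ) : ℂ :=
  Complex.exp ((xiR ε M n₀ t x lam : ℝ) : ℂ)

lemma xiR_shift (ε : ℝ) (hε : ε ≠ 0) (M n₀ : ℕ) (hM : 0 < M) (t : ℤ → ℕ → ℝ)
    (lam x r : ℝ) :
    xiR ε M n₀ t (x + r * (M * ε)) lam = xiR ε M n₀ t x lam + r * Real.log lam := by
  have hMε : (M : ℝ) * ε ≠ 0 := mul_ne_zero (Nat.cast_ne_zero.2 hM.ne') hε
  unfold xiR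
  rw [add_div, mul_div_cancel_right₀ r hMε]
  ring

lemma wR_shift (ε : ℝ) (hε : ε ≠ 0) (M n₀ : ℕ) (hM : 0 < M) (t : ℤ → ℕ → ℝ)
    {lam : ℝ} (hlam : 0 < lam) (x r : ℝ) :
    wR ε M n₀ t (x + r * (M * ε)) lam = ((lam ^ r : ℝ) : ℂ) * wR ε M n₀ t x lam := by
  unfold wR
  rw [xiR_shift ε hε M n₀ hM t lam x r, Complex.ofReal_add, Complex.exp_add,
    Real.rpow_def_of_pos hlam, Complex.ofReal_exp, mul_comm (Real.log lam) r]
  ring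

lemma xiR_hasDerivAt (ε : ℝ) (M n₀ : ℕ) (t : ℤ → ℕ → ℝ) (x : ℝ) {lam : ℝ}
    (hlam : 0 < lam) :
    HasDerivAt (fun μ => xiR ε M n₀ t x μ)
      (∑ n ∈ Finset.range (n₀ + 1), ∑ β ∈ Finset.Icc (-(M : ℤ) + 1) 0,
        ((n : ℝ) + 1 + (β : ℝ) / M) * t β n * lam ^ (-((n : ℝ) + 2 + (β : ℝ) / M)) +
        (x / (M * ε)) * lam⁻¹) lam := by
  unfold xiR
  apply HasDerivAt.add
  · have h : ∀ n ∈ Finset.range (n₀ + 1), ∀ β ∈ Finset.Icc (-(M : ℤ) + 1) 0,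
        HasDerivAt (fun μ : ℝ => μ ^ (-((n : ℝ) + 1 + (β : ℝ) / M)) * t β n)
          (-(((n : ℝ) + 1 + (β : ℝ) / M) * t β n *
            lam ^ (-((n : ℝ) + 2 + (β : ℝ) / M)))) lam := by
      intro n _ β _
      have := (Real.hasDerivAt_rpow_const
        (p := -((n : ℝ) + 1 + (β : ℝ) / M)) (x := lam) (Or.inl hlam.ne')).mul_const (t β n)
      refine this.congr_deriv ?_
      rw [show -((n : ℝ) + 1 + (β : ℝ) / M) - 1 = -((n : ℝ) + 2 + (β : ℝ) / M) by ring]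
      ring
    have hs : HasDerivAt (fun μ : ℝ => ∑ n ∈ Finset.range (n₀ + 1),
        ∑ β ∈ Finset.Icc (-(M : ℤ) + 1) 0, μ ^ (-((n : ℝ) + 1 + (β : ℝ) / M)) * t β n)
        (∑ n ∈ Finset.range (n₀ + 1), ∑ β ∈ Finset.Icc (-(M : ℤ) + 1) 0,
          -(((n : ℝ) + 1 + (β : ℝ) / M) * t β n *
            lam ^ (-((n : ℝ) + 2 + (β : ℝ) / M)))) lam := by
      apply HasDerivAt.fun_sum
      intro n hn
      exact HasDerivAt.fun_sum fun β hβ => h n hn β hβ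
    have := hs.fun_neg
    simpa [Finset.sum_neg_distrib] using this
  · have := ((Real.hasDerivAt_log hlam.ne').const_mul (x / (M * ε)))
    simpa [one_div] using this

lemma wR_hasDerivAt (ε : ℝ) (M n₀ : ℕ) (t : ℤ → ℕ → ℝ) (x : ℝ) {lam : ℝ}
    (hlam : 0 < lam) :
    HasDerivAt (fun μ => wR ε M n₀ t x μ)
      (wR ε M n₀ t x lam *
        ((∑ n ∈ Finset.range (n₀ + 1), ∑ β ∈ Finset.Icc (-(M : ℤ) + 1) 0,
          ((n : ℝ) + 1 + (β : ℝ) / M) * t β n * lam ^ (-((n : ℝ) + 2 + (β : ℝ) / M)) +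
          (x / (M * ε)) * lam⁻¹ : ℝ) : ℂ)) lam := by
  have h := ((xiR_hasDerivAt ε M n₀ t x hlam).ofReal_comp).cexp
  exact h

/-- (i) `w_R(x − Mε, λ) = λ⁻¹·w_R(x, λ)`, and
(ii) `(Γ_R w_R(·,λ))(x) = −λ²·∂w_R/∂λ (x, λ)` (the derivative of `w_R` with
respect to `λ⁻¹`). -/
theorem wR_linear_equations (ε : ℝ) (hε : ε ≠ 0) (M : ℕ) (hM : 0 < M) (n₀ : ℕ)
    (t : ℤ → ℕ → ℝ) (lam : ℝ) (hlam : 0 < lam) :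
    (∀ x : ℝ, wR ε M n₀ t (x - M * ε) lam = (lam : ℂ)⁻¹ * wR ε M n₀ t x lam) ∧
    (∀ x : ℝ, GammaR ε M n₀ t (fun y => wR ε M n₀ t y lam) x =
      -(lam : ℂ) ^ 2 * deriv (fun μ => wR ε M n₀ t x μ) lam) := by
  constructor
  · intro x
    have := wR_shift ε hε M n₀ hM t hlam x (-1)
    rw [show x + (-1 : ℝ) * ((M : ℝ) * ε) = x - M * ε by ring] at this
    rw [this, Real.rpow_neg_one]
    push_cast
    ring
  · intro x
    rw [(wR_hasDerivAt ε M n₀ t x hlam).deriv]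
    unfold GammaR
    have h1 : x + (M : ℝ) * ε = x + (1 : ℝ) * ((M : ℝ) * ε) := by ring
    have hw1 : wR ε M n₀ t (x + (M : ℝ) * ε) lam = (lam : ℂ) * wR ε M n₀ t x lam := by
      rw [h1, wR_shift ε hε M n₀ hM t hlam x 1, Real.rpow_one]
    have hterm : ∀ (n : ℕ) (β : ℤ),
        wR ε M n₀ t (x - ((M : ℝ) * n + (β : ℝ)) * ε) lam =
          ((lam ^ (-((n : ℝ) + (β : ℝ) / M)) : ℝ) : ℂ) * wR ε M n₀ t x lam := by
      intro n β
      have h2 : x - ((M : ℝ) * n + (β : ℝ)) * ε =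
          x + (-((n : ℝ) + (β : ℝ) / M)) * ((M : ℝ) * ε) := by
        have hM0 : (M : ℝ) ≠ 0 := Nat.cast_ne_zero.2 hM.ne'
        field_simp
        ring
      rw [h2, wR_shift ε hε M n₀ hM t hlam x _]
    simp only [hw1, hterm]
    set w := wR ε M n₀ t x lam with hwdef
    have hlam0 : lam ≠ 0 := hlam.ne'
    calc -((x / ((M : ℝ) * ε) : ℝ) : ℂ) * ((lam : ℂ) * w) -
          ∑ n ∈ Finset.range (n₀ + 1), ∑ β ∈ Finset.Icc (-(M : ℤ) + 1) 0,
            ((((n : ℝ) + 1 + (β : ℝ) / M) * t β n : ℝ) : ℂ) *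
              (((lam ^ (-((n : ℝ) + (β : ℝ) / M)) : ℝ) : ℂ) * w)
        = ((-(x / ((M : ℝ) * ε)) * lam -
            ∑ n ∈ Finset.range (n₀ + 1), ∑ β ∈ Finset.Icc (-(M : ℤ) + 1) 0,
              ((n : ℝ) + 1 + (β : ℝ) / M) * t β n *
                lam ^ (-((n : ℝ) + (β : ℝ) / M)) : ℝ) : ℂ) * w := by
          push_cast
          rw [sub_mul, Finset.sum_mul]
          congr 1
          · ring
          · refine Finset.sum_congr rfl fun n _ => ?_
            rw [Finset.sum_mul]
            exact Finset.sum_congr rfl fun β _ => by ring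
      _ = -(lam : ℂ) ^ 2 * (w *
            ((∑ n ∈ Finset.range (n₀ + 1), ∑ β ∈ Finset.Icc (-(M : ℤ) + 1) 0,
              ((n : ℝ) + 1 + (β : ℝ) / M) * t β n * lam ^ (-((n : ℝ) + 2 + (β : ℝ) / M)) +
              (x / (M * ε)) * lam⁻¹ : ℝ) : ℂ)) := by
          have key : -(x / ((M : ℝ) * ε)) * lam -
              (∑ n ∈ Finset.range (n₀ + 1), ∑ β ∈ Finset.Icc (-(M : ℤ) + 1) 0,
                ((n : ℝ) + 1 + (β : ℝ) / M) * t β n *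
                  lam ^ (-((n : ℝ) + (β : ℝ) / M))) =
              -(lam ^ 2) *
              (∑ n ∈ Finset.range (n₀ + 1), ∑ β ∈ Finset.Icc (-(M : ℤ) + 1) 0,
                ((n : ℝ) + 1 + (β : ℝ) / M) * t β n *
                  lam ^ (-((n : ℝ) + 2 + (β : ℝ) / M)) +
                (x / (M * ε)) * lam⁻¹) := by
            have h3 : lam ^ 2 *
                (∑ n ∈ Finset.range (n₀ + 1), ∑ β ∈ Finset.Icc (-(M : ℤ) + 1) 0,
                  ((n : ℝ) + 1 + (β : ℝ) / M) * t β n *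
                    lam ^ (-((n : ℝ) + 2 + (β : ℝ) / M))) =
                ∑ n ∈ Finset.range (n₀ + 1), ∑ β ∈ Finset.Icc (-(M : ℤ) + 1) 0,
                  ((n : ℝ) + 1 + (β : ℝ) / M) * t β n *
                    lam ^ (-((n : ℝ) + (β : ℝ) / M)) := by
              rw [Finset.mul_sum]
              refine Finset.sum_congr rfl fun n _ => ?_
              rw [Finset.mul_sum]
              refine Finset.sum_congr rfl fun β _ => ?_
              have hr : lam ^ 2 * lam ^ (-((n : ℝ) + 2 + (β : ℝ) / M)) =
                  lam ^ (-((n : ℝ) + (β : ℝ) / M)) := by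
                rw [← Real.rpow_natCast lam 2, ← Real.rpow_add hlam]
                congr 1
                push_cast
                ring
              calc lam ^ 2 * (((n : ℝ) + 1 + (β : ℝ) / M) * t β n *
                    lam ^ (-((n : ℝ) + 2 + (β : ℝ) / M)))
                  = ((n : ℝ) + 1 + (β : ℝ) / M) * t β n *
                    (lam ^ 2 * lam ^ (-((n : ℝ) + 2 + (β : ℝ) / M))) := by ring
                _ = _ := by rw [hr]
            have h2 : lam ^ 2 * ((x / ((M : ℝ) * ε)) * lam⁻¹) =
                (x / ((M : ℝ) * ε)) * lam := by
              field_simp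
            linear_combination h3 + h2
          rw [key]
          push_cast
          ring
end
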